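/- Under the D1Q2 scheme with s ∈ (0,1], λ ≥ M, and equilibrium initial data f^±_j^0 = h^±(u_j^0) with u_j^0 ∈ [α,β], the sum of the sequential total variations in space is nonincreasing: TV(f⁺^{n+1}) + TV(f⁻^{n+1}) ≤ TV(f⁺^n) + TV(f⁻^n) for all n ∈ ℕ. -/

import Mathlib

/-!
Since `|φ'| ≤ λ`, both equilibria `h⁺` and `h⁻` are nondecreasing on `[α, β]`, and `h⁺ + h⁻ = id`;
hence `|Δh⁺(u)| + |Δh⁻(u)| = |Δu| ≤ |Δf⁺| + |Δf⁻|`. The relaxation step is a convex combination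
of `f^±` and `h^±(u)`, so it does not increase `|Δf⁺| + |Δf⁻|` at any point, and the transport step
is a shift, which preserves total variation. Monotonicity is available at every time because the
boxes `f^± ∈ [h^±(α), h^±(β)]` are invariant under the scheme, which keeps `u` in `[α, β]`.
-/

open Set

/-- Equilibrium distribution function for velocity `+λ`. -/
noncomputable def hp (lam : ℝ) (flux : ℝ → ℝ) (ξ : ℝ) : ℝ := (lam * ξ + flux ξ) / (2 * lam)

/-- Equilibrium distribution function for velocity `-λ`. -/
noncomputable def hm (lam : ℝ) (flux : ℝ → ℝ) (ξ : ℝ) : ℝ := (lam * ξ - flux ξ) / (2 * lam)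

/-- Sequential total variation of a sequence indexed by `ℤ`. -/
noncomputable def tvSeq (w : ℤ → ℝ) : ENNReal := ∑' j : ℤ, ENNReal.ofReal |w (j + 1) - w j|

lemma tvSeq_comp_add_const (w : ℤ → ℝ) (k : ℤ) : tvSeq (fun j => w (j + k)) = tvSeq w := by
  unfold tvSeq
  rw [← (Equiv.addRight k).tsum_eq (fun j => ENNReal.ofReal |w (j + 1) - w j|)]
  simp only [Equiv.coe_addRight, add_right_comm _ (1 : ℤ) k]

lemma tvSeq_add_le_of_forall {F G P Q : ℤ → ℝ}
    (h : ∀ j, |F (j + 1) - F j| + |G (j + 1) - G j| ≤ |P (j + 1) - P j| + |Q (j + 1) - Q j|) :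
    tvSeq F + tvSeq G ≤ tvSeq P + tvSeq Q := by
  unfold tvSeq
  rw [← ENNReal.tsum_add, ← ENNReal.tsum_add]
  refine ENNReal.tsum_le_tsum fun j => ?_
  rw [← ENNReal.ofReal_add (abs_nonneg _) (abs_nonneg _),
    ← ENNReal.ofReal_add (abs_nonneg _) (abs_nonneg _)]
  exact ENNReal.ofReal_le_ofReal (h j)

section Equilibrium

variable {lam : ℝ} {flux : ℝ → ℝ}

lemma hp_add_hm (hlam : lam ≠ 0) (ξ : ℝ) : hp lam flux ξ + hm lam flux ξ = ξ := by
  unfold hp hm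
  field_simp
  ring

lemma abs_sub_le_mul_of_abs_deriv_le (hflux : Differentiable ℝ flux) {α β M : ℝ}
    (hM : ∀ ξ ∈ Icc α β, |deriv flux ξ| ≤ M) {a b : ℝ} (ha : a ∈ Icc α β) (hb : b ∈ Icc α β) :
    |flux b - flux a| ≤ M * |b - a| :=
  (convex_Icc α β).norm_image_sub_le_of_norm_deriv_le (fun x _ => hflux x) hM ha hb

variable {S : Set ℝ}

lemma monotoneOn_hp (hlam : 0 < lam)
    (hlip : ∀ a ∈ S, ∀ b ∈ S, |flux b - flux a| ≤ lam * |b - a|) :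
    MonotoneOn (hp lam flux) S := by
  intro a ha b hb hab
  have := (abs_le.mp (hlip a ha b hb)).1
  rw [abs_of_nonneg (sub_nonneg.mpr hab)] at this
  exact div_le_div_of_nonneg_right (by linarith) (by positivity)

lemma monotoneOn_hm (hlam : 0 < lam)
    (hlip : ∀ a ∈ S, ∀ b ∈ S, |flux b - flux a| ≤ lam * |b - a|) :
    MonotoneOn (hm lam flux) S := by
  intro a ha b hb hab
  have := (abs_le.mp (hlip a ha b hb)).2
  rw [abs_of_nonneg (sub_nonneg.mpr hab)] at this
  exact div_le_div_of_nonneg_right (by linarith) (by positivity)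

end Equilibrium

lemma abs_sub_add_abs_sub_eq_of_monotoneOn {f g : ℝ → ℝ} {S : Set ℝ}
    (hf : MonotoneOn f S) (hg : MonotoneOn g S) (hfg : ∀ x, f x + g x = x)
    {a b : ℝ} (ha : a ∈ S) (hb : b ∈ S) : |f b - f a| + |g b - g a| = |b - a| := by
  have hb' := hfg b
  have ha' := hfg a
  rcases le_total a b with hab | hba
  · rw [abs_of_nonneg (sub_nonneg.mpr (hf ha hb hab)),
      abs_of_nonneg (sub_nonneg.mpr (hg ha hb hab)), abs_of_nonneg (sub_nonneg.mpr hab)]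
    linarith
  · rw [abs_of_nonpos (sub_nonpos.mpr (hf hb ha hba)),
      abs_of_nonpos (sub_nonpos.mpr (hg hb ha hba)), abs_of_nonpos (sub_nonpos.mpr hba)]
    linarith

lemma abs_relax_sub_add_abs_relax_sub_le {f g : ℝ → ℝ} {S : Set ℝ}
    (hf : MonotoneOn f S) (hg : MonotoneOn g S) (hfg : ∀ x, f x + g x = x)
    {s : ℝ} (hs : s ∈ Icc (0 : ℝ) 1) {x y x' y' : ℝ} (h : x + y ∈ S) (h' : x' + y' ∈ S) :
    |(1 - s) * x' + s * f (x' + y') - ((1 - s) * x + s * f (x + y))|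
      + |(1 - s) * y' + s * g (x' + y') - ((1 - s) * y + s * g (x + y))|
      ≤ |x' - x| + |y' - y| := by
  obtain ⟨hs0, hs1⟩ := hs
  have hconv (a b : ℝ) : |(1 - s) * a + s * b| ≤ (1 - s) * |a| + s * |b| := by
    calc |(1 - s) * a + s * b| ≤ |(1 - s) * a| + |s * b| := abs_add_le _ _
      _ = (1 - s) * |a| + s * |b| := by
        rw [abs_mul, abs_mul, abs_of_nonneg (sub_nonneg.mpr hs1), abs_of_nonneg hs0]
  have hdiff : |x' + y' - (x + y)| ≤ |x' - x| + |y' - y| := by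
    rw [add_sub_add_comm]
    exact abs_add_le _ _
  calc _ = |(1 - s) * (x' - x) + s * (f (x' + y') - f (x + y))|
        + |(1 - s) * (y' - y) + s * (g (x' + y') - g (x + y))| := by ring_nf
    _ ≤ (1 - s) * (|x' - x| + |y' - y|)
        + s * (|f (x' + y') - f (x + y)| + |g (x' + y') - g (x + y)|) := by
      linarith [hconv (x' - x) (f (x' + y') - f (x + y)), hconv (y' - y) (g (x' + y') - g (x + y))]
    _ = (1 - s) * (|x' - x| + |y' - y|) + s * |x' + y' - (x + y)| := by
      rw [abs_sub_add_abs_sub_eq_of_monotoneOn hf hg hfg h h']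
    _ ≤ |x' - x| + |y' - y| := by nlinarith

section Scheme

variable {f g : ℝ → ℝ} {α β s : ℝ} {fp fm u : ℕ → ℤ → ℝ}

lemma add_mem_Icc_of_mem_Icc (hfg : ∀ x, f x + g x = x) {x y : ℝ}
    (hx : x ∈ Icc (f α) (f β)) (hy : y ∈ Icc (g α) (g β)) : x + y ∈ Icc α β := by
  rw [← hfg α, ← hfg β]
  exact ⟨add_le_add hx.1 hy.1, add_le_add hx.2 hy.2⟩

lemma mem_Icc_of_scheme (hf : MonotoneOn f (Icc α β)) (hg : MonotoneOn g (Icc α β))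
    (hfg : ∀ x, f x + g x = x) (hs : s ∈ Icc (0 : ℝ) 1) (hu : ∀ n j, u n j = fp n j + fm n j)
    (hrecp : ∀ n j, fp (n + 1) j = (1 - s) * fp n (j - 1) + s * f (u n (j - 1)))
    (hrecm : ∀ n j, fm (n + 1) j = (1 - s) * fm n (j + 1) + s * g (u n (j + 1)))
    (hinit : ∀ j, u 0 j ∈ Icc α β) (hinitp : ∀ j, fp 0 j = f (u 0 j))
    (hinitm : ∀ j, fm 0 j = g (u 0 j)) (n : ℕ) (j : ℤ) :
    u n j ∈ Icc α β := by
  have hbox (n : ℕ) : ∀ j, fp n j ∈ Icc (f α) (f β) ∧ fm n j ∈ Icc (g α) (g β) := by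
    induction n with
    | zero =>
      exact fun j => ⟨hinitp j ▸ hf.mapsTo_Icc (hinit j), hinitm j ▸ hg.mapsTo_Icc (hinit j)⟩
    | succ n ih =>
      have hun (j : ℤ) : u n j ∈ Icc α β := hu n j ▸ add_mem_Icc_of_mem_Icc hfg (ih j).1 (ih j).2
      intro j
      rw [hrecp, hrecm]
      exact ⟨convex_Icc _ _ (ih _).1 (hf.mapsTo_Icc (hun _)) (sub_nonneg.mpr hs.2) hs.1 (by ring),
        convex_Icc _ _ (ih _).2 (hg.mapsTo_Icc (hun _)) (sub_nonneg.mpr hs.2) hs.1 (by ring)⟩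
  exact hu n j ▸ add_mem_Icc_of_mem_Icc hfg (hbox n j).1 (hbox n j).2

lemma tvSeq_scheme_step_le (hf : MonotoneOn f (Icc α β)) (hg : MonotoneOn g (Icc α β))
    (hfg : ∀ x, f x + g x = x) (hs : s ∈ Icc (0 : ℝ) 1) (hu : ∀ n j, u n j = fp n j + fm n j)
    (hrecp : ∀ n j, fp (n + 1) j = (1 - s) * fp n (j - 1) + s * f (u n (j - 1)))
    (hrecm : ∀ n j, fm (n + 1) j = (1 - s) * fm n (j + 1) + s * g (u n (j + 1)))
    {n : ℕ} (hn : ∀ j, u n j ∈ Icc α β) :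
    tvSeq (fp (n + 1)) + tvSeq (fm (n + 1)) ≤ tvSeq (fp n) + tvSeq (fm n) := by
  set F : ℤ → ℝ := fun j => (1 - s) * fp n j + s * f (fp n j + fm n j)
  set G : ℤ → ℝ := fun j => (1 - s) * fm n j + s * g (fp n j + fm n j)
  have hF : fp (n + 1) = fun j => F (j + -1) := funext fun j => by rw [hrecp, hu]; rfl
  have hG : fm (n + 1) = fun j => G (j + 1) := funext fun j => by rw [hrecm, hu]
  rw [hF, hG, tvSeq_comp_add_const, tvSeq_comp_add_const]
  refine tvSeq_add_le_of_forall fun j => ?_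
  exact abs_relax_sub_add_abs_relax_sub_le hf hg hfg hs (hu n j ▸ hn j) (hu n (j + 1) ▸ hn (j + 1))

end Scheme

theorem stmt4_general (flux : ℝ → ℝ) (hflux : ContDiff ℝ 1 flux)
    (α β M lam s : ℝ) (hlampos : 0 < lam)
    (hs : s ∈ Set.Ioc (0 : ℝ) 1)
    (hM : ∀ ξ ∈ Set.Icc α β, |deriv flux ξ| ≤ M) (hlam : M ≤ lam)
    (fp fm u : ℕ → ℤ → ℝ)
    (hu : ∀ n j, u n j = fp n j + fm n j)
    (hrecp : ∀ n j, fp (n + 1) j = (1 - s) * fp n (j - 1) + s * hp lam flux (u n (j - 1)))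
    (hrecm : ∀ n j, fm (n + 1) j = (1 - s) * fm n (j + 1) + s * hm lam flux (u n (j + 1)))
    (hinit : ∀ j, u 0 j ∈ Set.Icc α β)
    (hinitp : ∀ j, fp 0 j = hp lam flux (u 0 j))
    (hinitm : ∀ j, fm 0 j = hm lam flux (u 0 j)) :
    ∀ n : ℕ, tvSeq (fp (n + 1)) + tvSeq (fm (n + 1)) ≤ tvSeq (fp n) + tvSeq (fm n) := by
  have hlip : ∀ a ∈ Icc α β, ∀ b ∈ Icc α β, |flux b - flux a| ≤ lam * |b - a| := fun a ha b hb =>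
    (abs_sub_le_mul_of_abs_deriv_le (hflux.differentiable one_ne_zero) hM ha hb).trans
      (mul_le_mul_of_nonneg_right hlam (abs_nonneg _))
  have hmonop := monotoneOn_hp hlampos hlip
  have hmonom := monotoneOn_hm hlampos hlip
  have hsum := hp_add_hm (flux := flux) hlampos.ne'
  have hs' : s ∈ Icc (0 : ℝ) 1 := Ioc_subset_Icc_self hs
  intro n
  exact tvSeq_scheme_step_le hmonop hmonom hsum hs' hu hrecp hrecm
    (mem_Icc_of_scheme hmonop hmonom hsum hs' hu hrecp hrecm hinit hinitp hinitm n)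

/-- Spatial total variation decrease for the D1Q2 scheme. -/
theorem stmt4 (flux : ℝ → ℝ) (hflux : ContDiff ℝ 1 flux)
    (α β M lam s : ℝ) (hαβ : α ≤ β) (hlampos : 0 < lam)
    (hs : s ∈ Set.Ioc (0 : ℝ) 1)
    (hM : ∀ ξ ∈ Set.Icc α β, |deriv flux ξ| ≤ M) (hlam : M ≤ lam)
    (fp fm u : ℕ → ℤ → ℝ)
    (hu : ∀ n j, u n j = fp n j + fm n j)
    (hrecp : ∀ n j, fp (n + 1) j = (1 - s) * fp n (j - 1) + s * hp lam flux (u n (j - 1)))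
    (hrecm : ∀ n j, fm (n + 1) j = (1 - s) * fm n (j + 1) + s * hm lam flux (u n (j + 1)))
    (hinit : ∀ j, u 0 j ∈ Set.Icc α β)
    (hinitp : ∀ j, fp 0 j = hp lam flux (u 0 j))
    (hinitm : ∀ j, fm 0 j = hm lam flux (u 0 j)) :
    ∀ n : ℕ, tvSeq (fp (n + 1)) + tvSeq (fm (n + 1)) ≤ tvSeq (fp n) + tvSeq (fm n) :=
  stmt4_general flux hflux α β M lam s hlampos hs hM hlam fp fm u hu hrecp hrecm hinit hinitp hinitm
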